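/- arXiv:2506.07567 — 2 statements merged into one kernel-verified Lean document; each statement's English description precedes it below -/
import Mathlib

section
/- Let L be a complete lattice with elements a < b such that every x ∈ L satisfies x ≤ a or b ≤ x, and let T be a left-continuous t-norm on L. Define T_* on the complete lattice [b, ⊤] by T_*(x,y) = b if T(x,y) ≤ a, and T_*(x,y) = T(x,y) otherwise. Then T_* is a left-continuous t-norm on [b, ⊤]. -/
/-- `T` is a t-norm on a lattice with top: commutative, associative,
with neutral element `⊤`, and monotone in each argument. -/
def IsTNorm {L : Type*} [Lattice L] [OrderTop L] (T : L → L → L) : Prop :=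
  (∀ a b : L, T a b = T b a) ∧
  (∀ a b c : L, T (T a b) c = T a (T b c)) ∧
  (∀ a : L, T ⊤ a = a) ∧
  (∀ a b c : L, b ≤ c → T a b ≤ T a c) ∧
  (∀ a b c : L, a ≤ b → T a c ≤ T b c)

/-- `T` is left-continuous on a complete lattice: it preserves suprema of
nonempty subsets in the second argument. -/
def IsLeftContinuous {L : Type*} [CompleteLattice L] (T : L → L → L) : Prop :=
  ∀ (a : L) (S : Set L), S.Nonempty → T a (sSup S) = ⨆ s ∈ S, T a s

instance factLeTop {L : Type*} [CompleteLattice L] (b : L) : Fact (b ≤ (⊤ : L)) := ⟨le_top⟩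

open Classical in
/-- The operation `T_*` on `[b, ⊤]` induced by a binary operation `T` on `L`:
`T_*(x,y) = b` if `T(x,y) ≤ a`, and `T_*(x,y) = T(x,y)` otherwise (which is well
defined since every element of `L` is `≤ a` or `≥ b`). -/
noncomputable def ordStar {L : Type*} [CompleteLattice L] (a b : L)
    (h : ∀ x : L, x ≤ a ∨ b ≤ x) (T : L → L → L) :
    Set.Icc b (⊤ : L) → Set.Icc b (⊤ : L) → Set.Icc b (⊤ : L) := fun x y =>
  if hxy : T x y ≤ a then ⟨b, ⟨le_rfl, le_top⟩⟩
  else ⟨T x y, ⟨(h (T x y)).resolve_left hxy, le_top⟩⟩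

/-- let `L` be a complete lattice with elements `a < b` such that every
`x ∈ L` satisfies `x ≤ a` or `b ≤ x`, and let `T` be a left-continuous t-norm on `L`.
Then `T_*` is a left-continuous t-norm on the complete lattice `[b, ⊤]`. -/
theorem ordStar_left_continuous_tnorm {L : Type*} [CompleteLattice L]
    (a b : L) (hab : a < b) (h : ∀ x : L, x ≤ a ∨ b ≤ x)
    (T : L → L → L) (hT : IsTNorm T) (hTl : IsLeftContinuous T) :
    IsTNorm (ordStar a b h T) ∧ IsLeftContinuous (ordStar a b h T) := by
  obtain ⟨hc, hassoc, htop, hmono2, hmono1⟩ := hT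
  set bb : Set.Icc b (⊤ : L) := ⟨b, le_rfl, le_top⟩ with hbb
  have hTb : ∀ x y : L, T x y ≤ x := fun x y =>
    (hmono2 x y ⊤ le_top).trans (by rw [hc, htop])
  -- b is absorbing
  have habsL : ∀ z : Set.Icc b (⊤ : L), ordStar a b h T bb z = bb := by
    intro z
    unfold ordStar
    split
    · rfl
    · next hz =>
      exact Subtype.ext (le_antisymm (hTb b z) ((h _).resolve_left hz))
  -- commutativity
  have hcomm : ∀ x y : Set.Icc b (⊤ : L),
      ordStar a b h T x y = ordStar a b h T y x := by
    intro x y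
    simp only [ordStar, hc (x : L) (y : L)]
    exact open Classical in dite_congr (by rw [hc]) (fun _ => rfl) (fun _ => rfl)
  have habsR : ∀ z : Set.Icc b (⊤ : L), ordStar a b h T z bb = bb := fun z =>
    (hcomm z bb).trans (habsL z)
  -- monotonicity in the second argument
  have hm2 : ∀ x y z : Set.Icc b (⊤ : L), y ≤ z →
      ordStar a b h T x y ≤ ordStar a b h T x z := by
    intro x y z hyz
    rw [← Subtype.coe_le_coe]
    unfold ordStar
    split_ifs with h1 h2 h2
    · exact le_rfl
    · exact (h _).resolve_left h2
    · exact absurd (le_trans (hmono2 (x : L) y z hyz) h2) h1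
    · exact hmono2 (x : L) y z hyz
  have hm1 : ∀ x y z : Set.Icc b (⊤ : L), x ≤ y →
      ordStar a b h T x z ≤ ordStar a b h T y z := by
    intro x y z hxy
    rw [hcomm x z, hcomm y z]
    exact hm2 z x y hxy
  have hvalP : ∀ x y : Set.Icc b (⊤ : L), T (x : L) y ≤ a →
      ordStar a b h T x y = bb := by
    intro x y hxy
    unfold ordStar
    rw [dif_pos hxy]
  have hvalN : ∀ x y : Set.Icc b (⊤ : L), ¬ T (x : L) y ≤ a →
      ((ordStar a b h T x y : L)) = T (x : L) y := by
    intro x y hxy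
    unfold ordStar
    rw [dif_neg hxy]
  have hTa : ∀ x : L, T x a ≤ a := fun x => by rw [hc]; exact hTb a x
  -- neutral element
  have htop' : ∀ x : Set.Icc b (⊤ : L), ordStar a b h T ⊤ x = x := by
    intro x
    have hcoe : ((⊤ : Set.Icc b (⊤ : L)) : L) = ⊤ := rfl
    have hx : ¬ T ((⊤ : Set.Icc b (⊤ : L)) : L) (x : L) ≤ a := by
      rw [hcoe, htop]
      exact fun hle => absurd (x.2.1.trans hle) hab.not_ge
    exact Subtype.ext (by rw [hvalN _ _ hx, hcoe, htop])
  -- associativity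
  have hassoc' : ∀ x y z : Set.Icc b (⊤ : L),
      ordStar a b h T (ordStar a b h T x y) z
        = ordStar a b h T x (ordStar a b h T y z) := by
    intro x y z
    by_cases h1 : T (x : L) y ≤ a
    · rw [hvalP x y h1, habsL]
      by_cases h2 : T (y : L) z ≤ a
      · rw [hvalP y z h2, habsR]
      · have hx : T (x : L) (ordStar a b h T y z) ≤ a := by
          rw [hvalN y z h2, ← hassoc]
          exact (hmono1 _ a (z : L) h1).trans (hTb a (z : L))
        rw [hvalP x _ hx]
    · by_cases h2 : T (y : L) z ≤ a
      · have hx : T ((ordStar a b h T x y : L)) (z : L) ≤ a := by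
          rw [hvalN x y h1, hassoc]
          exact (hmono2 (x : L) _ a h2).trans (hTa (x : L))
        rw [hvalP _ z hx, hvalP y z h2, habsR]
      · apply Subtype.ext
        by_cases h3 : T ((ordStar a b h T x y : L)) (z : L) ≤ a
        · have h4 : T (x : L) (ordStar a b h T y z) ≤ a := by
            rw [hvalN y z h2, ← hassoc, ← hvalN x y h1]
            exact h3
          rw [hvalP _ _ h3, hvalP _ _ h4]
        · have h4 : ¬ T (x : L) (ordStar a b h T y z) ≤ a := by
            rw [hvalN y z h2, ← hassoc, ← hvalN x y h1]
            exact h3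
          rw [hvalN _ _ h3, hvalN _ _ h4, hvalN x y h1, hvalN y z h2, hassoc]
  -- left continuity
  have hlc : IsLeftContinuous (ordStar a b h T) := by
    intro x S hS
    apply le_antisymm
    · rw [← Subtype.coe_le_coe]
      by_cases h1 : T (x : L) ((sSup S : Set.Icc b (⊤ : L)) : L) ≤ a
      · rw [hvalP _ _ h1]
        exact (⨆ s ∈ S, ordStar a b h T x s).2.1
      · rw [hvalN _ _ h1, Set.Icc.coe_sSup le_top hS, hTl (x : L) _ (hS.image _)]
        apply iSup₂_le
        rintro t ⟨s, hsS, rfl⟩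
        have h2 : T (x : L) (s : L) ≤ ((ordStar a b h T x s : L)) := by
          by_cases h3 : T (x : L) (s : L) ≤ a
          · rw [hvalP _ _ h3]
            exact h3.trans hab.le
          · rw [hvalN _ _ h3]
        exact h2.trans (Subtype.coe_le_coe.2
          (le_iSup₂ (f := fun s _ => ordStar a b h T x s) s hsS))
    · exact iSup₂_le fun s hsS => hm2 x s (sSup S) (le_sSup hsS)
  exact ⟨⟨hcomm, hassoc', htop', hm2, hm1⟩, hlc⟩
end

section
/- Let L be a complete lattice with elements a < b such that every x ∈ L satisfies x ≤ a or b ≤ x (so L is the ordinal sum of the complete lattices [⊥, a] and [b, ⊤]). Then L is 1-distributive if and only if the lattice [b, ⊤] (with top element ⊤) is 1-distributive. -/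
/-- A lattice `L` with top element `⊤` is `1`-distributive if every element `c` of `L`
is `1`-distributive, i.e. `c ⊓ (a ⊔ b) = (c ⊓ a) ⊔ (c ⊓ b)` whenever `a ⊔ b = ⊤`. -/
def OneDistributive (L : Type*) [Lattice L] [OrderTop L] : Prop :=
  ∀ c a b : L, a ⊔ b = ⊤ → c ⊓ (a ⊔ b) = (c ⊓ a) ⊔ (c ⊓ b)

/-- let `L` be a complete lattice with elements `a < b` such that every
`x ∈ L` satisfies `x ≤ a` or `b ≤ x` (so `L` is the ordinal sum of `[⊥, a]` and
`[b, ⊤]`). Then `L` is `1`-distributive if and only if the lattice `[b, ⊤]` is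
`1`-distributive. -/
theorem ordinal_sum_oneDistributive_iff {L : Type*} [CompleteLattice L]
    (a b : L) (hab : a < b) (h : ∀ x : L, x ≤ a ∨ b ≤ x) :
    OneDistributive L ↔ OneDistributive (Set.Icc b (⊤ : L)) := by
  have haT : a < ⊤ := lt_of_lt_of_le hab le_top
  constructor
  · intro hL c x y hxy
    have hxy' : (x : L) ⊔ (y : L) = ⊤ := congrArg Subtype.val hxy
    apply Subtype.ext
    simpa using hL (c : L) x y hxy'
  · intro hI c x y hxy
    rcases h x with hx | hx
    · rcases h y with hy | hy
      · exact absurd hxy (by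
          intro hh
          exact absurd (hh ▸ sup_le hx hy) (not_le_of_gt haT))
      · -- y ≥ b, x ≤ a, so x ≤ y, sup = y = ⊤
        have hxly : x ≤ y := le_trans hx (le_trans hab.le hy)
        have hyT : y = ⊤ := by rw [sup_eq_right.mpr hxly] at hxy; exact hxy
        rw [hxy, inf_top_eq, hyT, inf_top_eq]
        exact (sup_eq_right.mpr inf_le_left).symm
    · rcases h y with hy | hy
      · have hylx : y ≤ x := le_trans hy (le_trans hab.le hx)
        have hxT : x = ⊤ := by rw [sup_eq_left.mpr hylx] at hxy; exact hxy
        rw [hxy, inf_top_eq, hxT, inf_top_eq]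
        exact (sup_eq_left.mpr inf_le_left).symm
      · rcases h c with hc | hc
        · -- c ≤ a < b ≤ x, so c ⊓ x = c
          have hcx : c ≤ x := le_trans hc (le_trans hab.le hx)
          rw [hxy, inf_top_eq, inf_eq_left.mpr hcx]
          exact (sup_eq_left.mpr inf_le_left).symm
        · -- all three in [b, ⊤]
          set c' : Set.Icc b (⊤ : L) := ⟨c, hc, le_top⟩
          set x' : Set.Icc b (⊤ : L) := ⟨x, hx, le_top⟩
          set y' : Set.Icc b (⊤ : L) := ⟨y, hy, le_top⟩
          have hxy' : x' ⊔ y' = ⊤ := Subtype.ext (by simpa using hxy)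
          have := hI c' x' y' hxy'
          have := congrArg Subtype.val this
          simpa using this
end
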